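/- arXiv:2004.03920 — 3 statements merged into one kernel-verified Lean document; each statement's English description precedes it below -/
import Mathlib

section
/- Fix a real number λ ≠ 0. For all integers n, k with n ≥ k ≥ 0, the Jindalrae–Stirling number of the second kind satisfies S^{(2)}_{J,λ}(n,k) = Σ_{m=k}^{n} S_{2,λ}(n,m) S_{2,λ}(m,k). -/
/-!
Write `E = e_λ(t) - 1`. The degenerate Vandermonde identity gives
`e_λ^x(t) e_λ^y(t) = e_λ^{x+y}(t)`, so `e_λ(t)^N = e_λ^N(t)`; expanding `(1 + E)^N`
binomially and comparing coefficients yields `(N)_{n,λ} = Σ_k (n!/k!) [t^n]E^k (N)_k` for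
every natural `N`. A combination of falling factorials is determined by its values at the
naturals, hence `[t^n]E^k = (k!/n!) S_{2,λ}(n,k)`. Composition with `E` is a ring
homomorphism, so `(e_λ(E) - 1)^k = E^k ∘ E`, whose `n`-th coefficient
`Σ_m [t^m]E^k [t^n]E^m` is `(k!/n!) Σ_m S_{2,λ}(n,m) S_{2,λ}(m,k)`.
-/

open Finset

/-- The degenerate falling factorial `(x)_{n,λ} = x(x−λ)⋯(x−(n−1)λ)`;
for `lam = 1` it is the ordinary falling factorial `(x)_n`. -/
noncomputable def dff (lam : ℝ) (n : ℕ) (x : ℝ) : ℝ :=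
  ∏ i ∈ Finset.range n, (x - i * lam)

/-- The degenerate exponential `e_λ^x(t) = Σ_{n≥0} (x)_{n,λ} t^n/n!`. -/
noncomputable def degExp (lam x : ℝ) : PowerSeries ℝ :=
  PowerSeries.mk fun n => dff lam n x / n.factorial

/-- The degenerate logarithm `log_λ(1+t) = Σ_{n≥1} λ^{n−1}(1)_{n,1/λ} t^n/n!`. -/
noncomputable def degLog (lam : ℝ) : PowerSeries ℝ :=
  PowerSeries.mk fun n =>
    if n = 0 then 0 else lam ^ (n - 1) * dff (1 / lam) n 1 / n.factorial

/-- Composition `f(g(t))` of formal power series (valid definition of composition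
when `g` has zero constant term, as in all uses below). -/
noncomputable def pscomp (f g : PowerSeries ℝ) : PowerSeries ℝ :=
  PowerSeries.mk fun n =>
    ∑ k ∈ Finset.range (n + 1), (PowerSeries.coeff k f) * (PowerSeries.coeff n (g ^ k))

open PowerSeries

section DegenerateFallingFactorial

variable (lam : ℝ)

lemma dff_succ (n : ℕ) (x : ℝ) : dff lam (n + 1) x = dff lam n x * (x - n * lam) :=
  prod_range_succ _ _

theorem dff_add (n : ℕ) (x y : ℝ) :
    dff lam n (x + y) =
      ∑ ij ∈ antidiagonal n, (n.choose ij.1 : ℝ) * (dff lam ij.1 x * dff lam ij.2 y) := by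
  induction n with
  | zero => simp [dff]
  | succ n ih =>
    rw [sum_antidiagonal_choose_succ_mul (fun i j => dff lam i x * dff lam j y),
      ← sum_add_distrib, dff_succ, ih, sum_mul]
    refine sum_congr rfl fun ij hij => ?_
    have hn : n = ij.1 + ij.2 := (mem_antidiagonal.mp hij).symm
    rw [← Nat.choose_symm_of_eq_add hn, dff_succ, dff_succ, hn]
    push_cast
    ring

lemma dff_one_natCast (m k : ℕ) : dff 1 k m = m.descFactorial k := by
  simp [dff, ← descPochhammer_eval_eq_descFactorial, descPochhammer_eval_eq_prod_range]

lemma coeff_degExp (x : ℝ) (n : ℕ) : coeff n (degExp lam x) = dff lam n x / n.factorial :=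
  coeff_mk _ _

lemma degExp_zero : degExp lam 0 = 1 := by
  ext n
  rcases n with _ | n
  · simp [coeff_degExp, dff]
  · simp [coeff_degExp, dff, prod_range_succ']

lemma degExp_add (x y : ℝ) : degExp lam (x + y) = degExp lam x * degExp lam y := by
  ext n
  rw [coeff_mul, coeff_degExp, dff_add, sum_div]
  refine sum_congr rfl fun ij hij => ?_
  obtain ⟨i, j⟩ := ij
  obtain rfl := mem_antidiagonal.mp hij
  rw [coeff_degExp, coeff_degExp, Nat.choose_symm_add,
    ← Nat.add_choose_mul_factorial_mul_factorial]
  push_cast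
  have := (i + j).choose_pos (Nat.le_add_left j i)
  field_simp

lemma degExp_one_pow (N : ℕ) : degExp lam 1 ^ N = degExp lam N := by
  induction N with
  | zero => simp [degExp_zero]
  | succ N ih => rw [pow_succ, ih, ← degExp_add, Nat.cast_succ]

end DegenerateFallingFactorial

lemma PowerSeries.coeff_pow_of_lt {R : Type*} [CommSemiring R] {g : R⟦X⟧}
    (hg : constantCoeff g = 0) {n k : ℕ} (h : n < k) : coeff n (g ^ k) = 0 :=
  coeff_of_lt_order n
    ((Nat.cast_lt.mpr h).trans_le (le_order_pow_of_constantCoeff_eq_zero k hg))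

theorem eq_zero_of_forall_sum_mul_descFactorial_eq_zero {R : Type*} [CommRing R] [IsDomain R]
    [CharZero R] {n : ℕ} {c : ℕ → R}
    (h : ∀ m : ℕ, ∑ k ∈ range (n + 1), c k * m.descFactorial k = 0) :
    ∀ k ≤ n, c k = 0 := by
  intro k
  induction k using Nat.strong_induction_on with
  | _ k ih =>
    intro hk
    have hsum := h k
    rw [sum_eq_single k (fun j _ hjk => ?_) (fun hk' => absurd (mem_range.mpr (by omega)) hk'),
      Nat.descFactorial_self] at hsum
    · exact (mul_eq_zero.mp hsum).resolve_right (Nat.cast_ne_zero.mpr k.factorial_ne_zero)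
    · rcases lt_or_gt_of_ne hjk with hj | hj
      · rw [ih j hj (by omega), zero_mul]
      · rw [Nat.descFactorial_eq_zero_iff_lt.mpr hj, Nat.cast_zero, mul_zero]

section PowersOfDegExpSubOne

variable (lam : ℝ)

lemma constantCoeff_degExp_sub_one : constantCoeff (degExp lam 1 - 1) = 0 := by
  rw [map_sub, map_one, ← coeff_zero_eq_constantCoeff_apply, coeff_degExp]
  simp [dff]

lemma dff_natCast_eq_sum (N n : ℕ) :
    dff lam n N = ∑ k ∈ range (n + 1),
      (n.factorial / k.factorial : ℝ) * coeff n ((degExp lam 1 - 1) ^ k) * N.descFactorial k := by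
  set E := degExp lam 1 - 1
  have hE := constantCoeff_degExp_sub_one lam
  have hexp : degExp lam (N : ℝ) =
      ∑ k ∈ range (N + 1), E ^ k * 1 ^ (N - k) * (N.choose k : PowerSeries ℝ) := by
    rw [← degExp_one_pow, ← add_pow, sub_add_cancel]
  have hcoeff := congr(coeff n $hexp)
  simp only [coeff_degExp, map_sum, one_pow, mul_one, ← map_natCast (C (R := ℝ)),
    coeff_mul_C] at hcoeff
  have hN : ∀ k ≥ N + 1, coeff n (E ^ k) * (N.choose k : ℝ) = 0 := fun k hk => by
    rw [Nat.choose_eq_zero_of_lt hk, Nat.cast_zero, mul_zero]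
  have hn : ∀ k ≥ n + 1, coeff n (E ^ k) * (N.choose k : ℝ) = 0 := fun k hk => by
    rw [coeff_pow_of_lt hE hk, zero_mul]
  rw [← eventually_constant_sum hN (Nat.le_add_left _ n), eventually_constant_sum hn (by omega),
    div_eq_iff (Nat.cast_ne_zero.mpr n.factorial_ne_zero), sum_mul] at hcoeff
  rw [hcoeff]
  refine sum_congr rfl fun k _ => ?_
  rw [Nat.descFactorial_eq_factorial_mul_choose]
  push_cast
  field_simp

lemma coeff_degExp_sub_one_pow {S2 : ℕ → ℕ → ℝ}
    (hS2 : ∀ (n : ℕ) (x : ℝ), dff lam n x = ∑ k ∈ range (n + 1), S2 n k * dff 1 k x)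
    {n k : ℕ} (hk : k ≤ n) :
    coeff n ((degExp lam 1 - 1) ^ k) = k.factorial / n.factorial * S2 n k := by
  have hS2k := eq_zero_of_forall_sum_mul_descFactorial_eq_zero (n := n)
    (c := fun j => S2 n j - n.factorial / j.factorial * coeff n ((degExp lam 1 - 1) ^ j))
    (fun m => by
      simp only [sub_mul, sum_sub_distrib]
      rw [← dff_natCast_eq_sum]
      simp only [← dff_one_natCast, ← hS2, sub_self]) k hk
  rw [sub_eq_zero] at hS2k
  rw [hS2k]
  field_simp

end PowersOfDegExpSubOne

lemma pscomp_eq_subst {f g : PowerSeries ℝ} (hg : constantCoeff g = 0) :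
    pscomp f g = f.subst g := by
  ext n
  rw [coeff_subst' (HasSubst.of_constantCoeff_zero' hg),
    finsum_eq_finsetSum_of_support_subset (s := range (n + 1)), pscomp, coeff_mk]
  · simp only [smul_eq_mul]
  · intro d hd
    by_contra hdn
    exact hd (show coeff d f • coeff n (g ^ d) = 0 by
      rw [coeff_pow_of_lt hg (by simpa using hdn), smul_zero])

lemma coeff_pscomp_pow_degExp_sub_one (lam : ℝ) {S2 : ℕ → ℕ → ℝ}
    (hS2 : ∀ (n : ℕ) (x : ℝ), dff lam n x = ∑ k ∈ range (n + 1), S2 n k * dff 1 k x)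
    (n k : ℕ) :
    coeff n (pscomp ((degExp lam 1 - 1) ^ k) (degExp lam 1 - 1)) =
      k.factorial / n.factorial * ∑ m ∈ Icc k n, S2 n m * S2 m k := by
  have hE := constantCoeff_degExp_sub_one lam
  rw [pscomp, coeff_mk, mul_sum,
    ← sum_subset fun m hm => mem_range.mpr (Nat.lt_succ_of_le (mem_Icc.mp hm).2)]
  · refine sum_congr rfl fun m hm => ?_
    obtain ⟨hkm, hmn⟩ := mem_Icc.mp hm
    rw [coeff_degExp_sub_one_pow lam hS2 hkm, coeff_degExp_sub_one_pow lam hS2 hmn]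
    field_simp
  · intro m hm hmIcc
    rw [mem_range] at hm
    rw [mem_Icc] at hmIcc
    rw [coeff_pow_of_lt hE (by omega), zero_mul]

theorem jindalrae_stirling_second_kind_general (lam : ℝ)
    (S2 SJ2 : ℕ → ℕ → ℝ)
    (hS2 : ∀ (n : ℕ) (x : ℝ), dff lam n x = ∑ k ∈ Finset.range (n + 1), S2 n k * dff 1 k x)
    (hSJ2 : ∀ k : ℕ, (PowerSeries.C ((k.factorial : ℝ))⁻¹) * (pscomp (degExp lam 1) (degExp lam 1 - 1) - 1) ^ k = PowerSeries.mk (fun n => if k ≤ n then SJ2 n k / n.factorial else 0))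
    : ∀ n k : ℕ, k ≤ n → SJ2 n k = ∑ m ∈ Finset.Icc k n, S2 n m * S2 m k := by
  intro n k hkn
  have hE := constantCoeff_degExp_sub_one lam
  have hcomp : (pscomp (degExp lam 1) (degExp lam 1 - 1) - 1) ^ k =
      pscomp ((degExp lam 1 - 1) ^ k) (degExp lam 1 - 1) := by
    rw [pscomp_eq_subst hE, pscomp_eq_subst hE,
      ← coe_substAlgHom (HasSubst.of_constantCoeff_zero' hE), map_pow, map_sub, map_one]
  have hcoeff := congr(coeff n $(hSJ2 k))
  rw [coeff_C_mul, hcomp, coeff_pscomp_pow_degExp_sub_one lam hS2, coeff_mk, if_pos hkn]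
    at hcoeff
  field_simp at hcoeff
  exact hcoeff.symm

theorem jindalrae_stirling_second_kind (lam : ℝ) (hlam : lam ≠ 0)
    (S2 SJ2 : ℕ → ℕ → ℝ)
    (hS2 : ∀ (n : ℕ) (x : ℝ), dff lam n x = ∑ k ∈ Finset.range (n + 1), S2 n k * dff 1 k x)
    (hSJ2 : ∀ k : ℕ, (PowerSeries.C ((k.factorial : ℝ))⁻¹) * (pscomp (degExp lam 1) (degExp lam 1 - 1) - 1) ^ k = PowerSeries.mk (fun n => if k ≤ n then SJ2 n k / n.factorial else 0))
    : ∀ n k : ℕ, k ≤ n → SJ2 n k = ∑ m ∈ Finset.Icc k n, S2 n m * S2 m k :=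
  jindalrae_stirling_second_kind_general lam S2 SJ2 hS2 hSJ2
end

section
/- Fix a real number λ ≠ 0. For every integer n ≥ 1, S^{(1)}_{J,λ}(n,1) = Σ_{m=1}^{n} (m−1)! · C(λ−1, m−1) · S_{1,λ}(n,m), where C(λ−1, m−1) = (λ−1)(λ−2)⋯(λ−m+1)/(m−1)! is the generalized binomial coefficient. -/
open Finset

/-!
Write `B = (1 + t)^λ` (Mathlib's `PowerSeries.binomialSeries ℝ λ`); the degenerate logarithm is
`L = (B − 1)/λ`. For natural `j` the `tⁿ`-coefficient of `Bʲ = (1 + t)^{jλ}` is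
`(jλ)_n / n! = Σ_l S_{1,λ}(n,l) λˡ l! C(j,l) / n!`, while the binomial theorem gives
`Bʲ = (1 + λL)ʲ = Σ_l C(j,l) λˡ Lˡ`. Comparing, for `j = 0, …, n`, is a unitriangular system, so
`[tⁿ] Lᵐ = m! S_{1,λ}(n,m) / n!`. Substituting this and `[tᵐ] L = (λ−1)_{m−1} / m!` into
`[tⁿ] L(L(t)) = Σ_m [tᵐ] L · [tⁿ] Lᵐ` gives the formula.
-/

open PowerSeries

theorem dff_mul_mul (c a x : ℝ) (n : ℕ) : dff (c * a) n (c * x) = c ^ n * dff a n x := by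
  have hc : c ^ n = ∏ _i ∈ range n, c := by simp
  rw [dff, dff, hc, ← prod_mul_distrib]
  exact prod_congr rfl fun i _ => by ring

theorem dff_one_eq_descPochhammer_eval (n : ℕ) (x : ℝ) :
    dff 1 n x = (descPochhammer ℝ n).eval x := by
  induction n with
  | zero => simp [dff]
  | succ n ih => rw [dff, prod_range_succ, ← dff, ih, descPochhammer_succ_eval, mul_one]

theorem dff_one_natCast_s5 (l j : ℕ) : dff 1 l j = l.factorial * j.choose l := by
  rw [dff_one_eq_descPochhammer_eval, descPochhammer_eval_eq_descFactorial,
    Nat.descFactorial_eq_factorial_mul_choose, Nat.cast_mul]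

theorem dff_one_succ (n : ℕ) (x : ℝ) : dff 1 (n + 1) x = x * dff 1 n (x - 1) := by
  simp only [dff_one_eq_descPochhammer_eval, descPochhammer_succ_left, Polynomial.eval_mul,
    Polynomial.eval_X, Polynomial.eval_comp, Polynomial.eval_sub, Polynomial.eval_one]

theorem Ring.choose_eq_dff_one_div (x : ℝ) (n : ℕ) :
    Ring.choose x n = dff 1 n x / n.factorial := by
  rw [Ring.choose_eq_smul, ← Polynomial.aeval_eq_smeval, Polynomial.aeval_def,
    ← Polynomial.eval_map, descPochhammer_map, ← dff_one_eq_descPochhammer_eval, smul_eq_mul,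
    inv_mul_eq_div]

theorem PowerSeries.binomialSeries_nsmul {R A : Type*} [CommRing R] [BinomialRing R] [Ring A]
    [Algebra R A] (j : ℕ) (r : R) : binomialSeries A (j • r) = binomialSeries A r ^ j := by
  induction j with
  | zero => simp
  | succ j ih => rw [succ_nsmul, binomialSeries_add, ih, pow_succ]

theorem eq_of_sum_range_choose_mul_eq {R : Type*} [Ring R] {N : ℕ} {a b : ℕ → R}
    (h : ∀ j ≤ N, ∑ l ∈ range (j + 1), (j.choose l : R) * a l
      = ∑ l ∈ range (j + 1), (j.choose l : R) * b l) :
    ∀ l ≤ N, a l = b l := by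
  intro l
  induction l using Nat.strong_induction_on with
  | _ l ih =>
    intro hl
    have hlow : ∀ i ∈ range l, (l.choose i : R) * a i = (l.choose i : R) * b i :=
      fun i hi => by rw [ih i (mem_range.mp hi) ((mem_range.mp hi).le.trans hl)]
    simpa [sum_range_succ, sum_congr rfl hlow] using h l hl

theorem dff_natCast_mul_eq_sum {lam : ℝ} {n : ℕ} {s : ℕ → ℝ}
    (hs : ∀ x, dff 1 n x = ∑ l ∈ range (n + 1), s l * dff lam l x) {j : ℕ} (hj : j ≤ n) :
    dff 1 n (j * lam)
      = ∑ l ∈ range (j + 1), (j.choose l : ℝ) * (lam ^ l * (l.factorial * s l)) := by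
  have hterm : ∀ l,
      s l * dff lam l (j * lam) = (j.choose l : ℝ) * (lam ^ l * (l.factorial * s l)) := fun l => by
      have h := dff_mul_mul lam 1 j l
      rw [mul_one, mul_comm lam] at h
      rw [h, dff_one_natCast_s5]
      ring
  rw [hs, sum_congr rfl fun l _ => hterm l]
  refine (sum_subset (range_subset_range.mpr (by omega)) fun l _ hl => ?_).symm
  rw [Nat.choose_eq_zero_of_lt (by simpa using hl), Nat.cast_zero, zero_mul]

section DegLog

variable {lam : ℝ} (hlam : lam ≠ 0)
include hlam

theorem pow_mul_dff_inv (n : ℕ) : lam ^ n * dff (1 / lam) n 1 = dff 1 n lam := by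
  rw [← dff_mul_mul, mul_one_div_cancel hlam, mul_one]

theorem coeff_succ_degLog (k : ℕ) :
    coeff (k + 1) (degLog lam) = dff 1 k (lam - 1) / (k + 1).factorial := by
  have h := pow_mul_dff_inv hlam (k + 1)
  rw [dff_one_succ, pow_succ', mul_assoc] at h
  simp only [degLog, coeff_mk, Nat.add_one_ne_zero, if_false, Nat.add_sub_cancel,
    mul_left_cancel₀ hlam h]

theorem binomialSeries_eq_C_mul_degLog_add_one :
    PowerSeries.binomialSeries ℝ lam = C lam * degLog lam + 1 := by
  ext n
  rcases n with _ | k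
  · simp [degLog]
  · rw [binomialSeries_coeff, smul_eq_mul, mul_one, Ring.choose_eq_dff_one_div, map_add,
      coeff_C_mul, coeff_succ_degLog hlam, coeff_one, if_neg k.add_one_ne_zero, add_zero,
      dff_one_succ, mul_div_assoc]

theorem coeff_binomialSeries_pow (n j : ℕ) :
    coeff n (PowerSeries.binomialSeries ℝ lam ^ j)
      = ∑ l ∈ range (j + 1), (j.choose l : ℝ) * (lam ^ l * coeff n (degLog lam ^ l)) := by
  rw [binomialSeries_eq_C_mul_degLog_add_one hlam, add_pow, map_sum]
  refine sum_congr rfl fun l _ => ?_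
  rw [one_pow, mul_one, mul_pow, ← map_pow, ← map_natCast C, mul_comm, ← mul_assoc, ← map_mul,
    coeff_C_mul, mul_assoc]

theorem coeff_degLog_pow {n : ℕ} {s : ℕ → ℝ}
    (hs : ∀ x, dff 1 n x = ∑ l ∈ range (n + 1), s l * dff lam l x) {m : ℕ} (hm : m ≤ n) :
    coeff n (degLog lam ^ m) = m.factorial * s m / n.factorial := by
  have h := eq_of_sum_range_choose_mul_eq (N := n)
    (a := fun l => lam ^ l * coeff n (degLog lam ^ l))
    (b := fun l => lam ^ l * (l.factorial * s l / n.factorial)) (fun j hj => by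
      calc _ = coeff n (PowerSeries.binomialSeries ℝ (j • lam)) := by
              rw [PowerSeries.binomialSeries_nsmul, coeff_binomialSeries_pow hlam]
        _ = dff 1 n (j * lam) / n.factorial := by
              rw [PowerSeries.binomialSeries_coeff, smul_eq_mul, mul_one, nsmul_eq_mul,
                Ring.choose_eq_dff_one_div]
        _ = _ := by
              rw [dff_natCast_mul_eq_sum hs hj, sum_div]
              exact sum_congr rfl fun l _ => by ring) m hm
  exact mul_left_cancel₀ (pow_ne_zero m hlam) h

end DegLog

theorem jindalrae_stirling1_at_one (lam : ℝ) (hlam : lam ≠ 0)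
    (S1 SJ1 : ℕ → ℕ → ℝ)
    (hS1 : ∀ (n : ℕ) (x : ℝ), dff 1 n x = ∑ l ∈ Finset.range (n + 1), S1 n l * dff lam l x)
    (hSJ1 : ∀ k : ℕ, (PowerSeries.C ((k.factorial : ℝ))⁻¹) * (pscomp (degLog lam) (degLog lam)) ^ k = PowerSeries.mk (fun n => if k ≤ n then SJ1 n k / n.factorial else 0))
    : ∀ n : ℕ, 1 ≤ n → SJ1 n 1 = ∑ m ∈ Finset.Icc 1 n, ((m - 1).factorial : ℝ) * (dff 1 (m - 1) (lam - 1) / (m - 1).factorial) * S1 n m := by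
  intro n hn
  have hcomp := congrArg (coeff n) (hSJ1 1)
  simp only [Nat.factorial_one, Nat.cast_one, inv_one, map_one, one_mul, pow_one, pscomp,
    coeff_mk, if_pos hn] at hcomp
  have hzero : coeff 0 (degLog lam) = 0 := by simp [degLog]
  rw [Nat.range_succ_eq_Icc_zero, ← add_sum_Ioc_eq_sum_Icc n.zero_le, hzero, zero_mul, zero_add,
    ← Icc_add_one_left_eq_Ioc, zero_add, eq_div_iff (by positivity)] at hcomp
  rw [← hcomp, sum_mul]
  refine sum_congr rfl fun m hm => ?_
  obtain ⟨k, rfl⟩ := Nat.exists_eq_add_one.mpr (mem_Icc.mp hm).1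
  rw [coeff_succ_degLog hlam, coeff_degLog_pow hlam (hS1 n) (mem_Icc.mp hm).2, Nat.add_sub_cancel]
  field_simp
end

section
/- Fix a real number λ ≠ 0. For every integer n ≥ 0 and every real x, the Jindalrae polynomial satisfies J_{n,λ}(x) = Σ_{k=0}^{n} (x)_{k,λ} S^{(2)}_{J,λ}(n,k); in particular J_{n,λ} = Σ_{k=0}^{n} (1)_{k,λ} S^{(2)}_{J,λ}(n,k). -/
open Finset

open PowerSeries Nat

theorem coeff_pscomp (f g : PowerSeries ℝ) (n : ℕ) :
    coeff n (pscomp f g) = ∑ k ∈ range (n + 1), coeff k f * coeff n (g ^ k) :=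
  coeff_mk _ _

theorem factorial_mul_coeff_degExp (lam x : ℝ) (n : ℕ) :
    (n ! : ℝ) * coeff n (degExp lam x) = dff lam n x := by
  rw [degExp, coeff_mk]
  field_simp

theorem coeff_pow_of_egf {K : Type*} [Field K] [CharZero K] {g : PowerSeries K} {S : ℕ → K}
    {k n : ℕ} (hS : C (k ! : K)⁻¹ * g ^ k = mk fun m => if k ≤ m then S m / m ! else 0)
    (hkn : k ≤ n) : coeff n (g ^ k) = k ! * S n / n ! := by
  have h := congrArg (coeff n) hS
  rw [coeff_C_mul, coeff_mk, if_pos hkn] at h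
  rw [mul_div_assoc, ← h, ← mul_assoc,
    mul_inv_cancel₀ (Nat.cast_ne_zero.mpr k.factorial_ne_zero), one_mul]

theorem factorial_mul_coeff_pscomp (f g : PowerSeries ℝ) (S : ℕ → ℕ → ℝ)
    (hS : ∀ k : ℕ, C (k ! : ℝ)⁻¹ * g ^ k = mk fun m => if k ≤ m then S m k / m ! else 0)
    (n : ℕ) :
    (n ! : ℝ) * coeff n (pscomp f g) = ∑ k ∈ range (n + 1), (k ! * coeff k f) * S n k := by
  rw [coeff_pscomp, mul_sum]
  refine sum_congr rfl fun k hk => ?_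
  rw [coeff_pow_of_egf (hS k) (Nat.lt_succ_iff.mp (mem_range.mp hk))]
  field_simp

theorem jindalrae_polynomial_expansion_general (lam : ℝ)
    (SJ2 : ℕ → ℕ → ℝ) (J : ℕ → ℝ → ℝ)
    (hSJ2 : ∀ k : ℕ, (PowerSeries.C ((k.factorial : ℝ))⁻¹) * (pscomp (degExp lam 1) (degExp lam 1 - 1) - 1) ^ k = PowerSeries.mk (fun n => if k ≤ n then SJ2 n k / n.factorial else 0))
    (hJ : ∀ x : ℝ, pscomp (degExp lam x) (pscomp (degExp lam 1) (degExp lam 1 - 1) - 1) = PowerSeries.mk (fun n => J n x / n.factorial))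
    : ∀ (n : ℕ) (x : ℝ), J n x = ∑ k ∈ Finset.range (n + 1), dff lam k x * SJ2 n k := by
  intro n x
  calc J n x = n ! * coeff n (mk fun m => J m x / m !) := by
        rw [coeff_mk]
        field_simp
    _ = ∑ k ∈ range (n + 1), (k ! * coeff k (degExp lam x)) * SJ2 n k := by
        rw [← hJ x, factorial_mul_coeff_pscomp _ _ SJ2 hSJ2]
    _ = ∑ k ∈ range (n + 1), dff lam k x * SJ2 n k := by
        simp only [factorial_mul_coeff_degExp]

theorem jindalrae_polynomial_expansion (lam : ℝ) (hlam : lam ≠ 0)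
    (SJ2 : ℕ → ℕ → ℝ) (J : ℕ → ℝ → ℝ)
    (hSJ2 : ∀ k : ℕ, (PowerSeries.C ((k.factorial : ℝ))⁻¹) * (pscomp (degExp lam 1) (degExp lam 1 - 1) - 1) ^ k = PowerSeries.mk (fun n => if k ≤ n then SJ2 n k / n.factorial else 0))
    (hJ : ∀ x : ℝ, pscomp (degExp lam x) (pscomp (degExp lam 1) (degExp lam 1 - 1) - 1) = PowerSeries.mk (fun n => J n x / n.factorial))
    : ∀ (n : ℕ) (x : ℝ), J n x = ∑ k ∈ Finset.range (n + 1), dff lam k x * SJ2 n k :=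
  jindalrae_polynomial_expansion_general lam SJ2 J hSJ2 hJ
end
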